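/- arXiv:2208.09032 — 3 statements merged into one kernel-verified Lean document; each statement's English description precedes it below -/
import Mathlib

section
/- The knot group of the (3, −3, 3)-pretzel knot, with presentation derived from its standard diagram, surjects onto the Coxeter group G = ⟨a, b, c | a² = b² = c² = 1, (ab)³ = (bc)³ = (ac)³ = 1⟩ with meridians mapping to reflections; consequently its meridional rank is at least 3. -/
open FreeGroup

/-- The Wirtinger relators of the standard 9-crossing pretzel diagram of the pretzel knot
`P(3,-3,3)` (one generator per arc, one conjugation relation per crossing; the middle band
has crossings of the opposite sign). -/
def pretzelRels : Set (FreeGroup (Fin 9)) :=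
  {(of 2)⁻¹ * (of 0 * of 1 * (of 0)⁻¹),
   (of 0)⁻¹ * (of 2 * of 3 * (of 2)⁻¹),
   (of 4)⁻¹ * (of 3 * of 2 * (of 3)⁻¹),
   (of 1)⁻¹ * ((of 5)⁻¹ * of 6 * of 5),
   (of 3)⁻¹ * ((of 6)⁻¹ * of 5 * of 6),
   (of 6)⁻¹ * ((of 3)⁻¹ * of 7 * of 3),
   (of 8)⁻¹ * (of 5 * of 0 * (of 5)⁻¹),
   (of 5)⁻¹ * (of 8 * of 4 * (of 8)⁻¹),
   (of 7)⁻¹ * (of 4 * of 8 * (of 4)⁻¹)}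

/-- The relations of the affine Coxeter group
`G = ⟨a, b, c | a² = b² = c² = 1, (ab)³ = (bc)³ = (ac)³ = 1⟩` of type `Ã₂`. -/
def affineA2Rels : Set (FreeGroup (Fin 3)) :=
  {of 0 ^ 2, of 1 ^ 2, of 2 ^ 2,
   (of 0 * of 1) ^ 3, (of 1 * of 2) ^ 3, (of 0 * of 2) ^ 3}

set_option linter.unnecessarySeqFocus false

namespace Pz
abbrev GA := PresentedGroup affineA2Rels
def A : GA := PresentedGroup.of 0
def B : GA := PresentedGroup.of 1
def C : GA := PresentedGroup.of 2

lemma relA2 {r} (hr : r ∈ affineA2Rels) : PresentedGroup.mk affineA2Rels r = 1 :=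
  (QuotientGroup.eq_one_iff r).mpr (Subgroup.subset_normalClosure hr)

lemma sqA : A * A = 1 := by
  have h := relA2 (Set.mem_insert _ _)
  rw [map_pow, pow_two] at h; exact h
lemma sqB : B * B = 1 := by
  have h := relA2 (Set.mem_insert_of_mem _ (Set.mem_insert _ _))
  rw [map_pow, pow_two] at h; exact h
lemma sqC : C * C = 1 := by
  have h := relA2 (Set.mem_insert_of_mem _ (Set.mem_insert_of_mem _ (Set.mem_insert _ _)))
  rw [map_pow, pow_two] at h; exact h
lemma cubeAB : (A * B) ^ 3 = 1 := by
  have h := relA2 (Set.mem_insert_of_mem _ (Set.mem_insert_of_mem _ (Set.mem_insert_of_mem _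
    (Set.mem_insert _ _))))
  rw [map_pow] at h; exact h
lemma cubeBC : (B * C) ^ 3 = 1 := by
  have h := relA2 (Set.mem_insert_of_mem _ (Set.mem_insert_of_mem _ (Set.mem_insert_of_mem _
    (Set.mem_insert_of_mem _ (Set.mem_insert _ _)))))
  rw [map_pow] at h; exact h
lemma cubeAC : (A * C) ^ 3 = 1 := by
  have h := relA2 (Set.mem_insert_of_mem _ (Set.mem_insert_of_mem _ (Set.mem_insert_of_mem _
    (Set.mem_insert_of_mem _ (Set.mem_insert_of_mem _ rfl)))))
  rw [map_pow] at h; exact h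




lemma invA : A⁻¹ = A := inv_eq_of_mul_eq_one_left sqA
lemma invB : B⁻¹ = B := inv_eq_of_mul_eq_one_left sqB
lemma invC : C⁻¹ = C := inv_eq_of_mul_eq_one_left sqC

lemma sqA' (t : GA) : A * (A * t) = t := by rw [← mul_assoc, sqA, one_mul]
lemma sqB' (t : GA) : B * (B * t) = t := by rw [← mul_assoc, sqB, one_mul]
lemma sqC' (t : GA) : C * (C * t) = t := by rw [← mul_assoc, sqC, one_mul]

/-- generic: from `(x*y)^3 = 1` and `y⁻¹ = y`, get `xyxyx·t = y·t`. -/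
lemma pent {G : Type*} [Group G] {x y : G} (hy : y⁻¹ = y) (h : (x * y) ^ 3 = 1) (t : G) :
    x * (y * (x * (y * (x * t)))) = y * t := by
  rw [pow_succ, pow_succ, pow_one] at h
  have q : x * y * x * y * x = y := by
    calc x*y*x*y*x = ((x*y)*(x*y)*(x*y)) * y⁻¹ := by group
    _ = y⁻¹ := by rw [h, one_mul]
    _ = y := hy
  rw [show x * (y * (x * (y * (x * t)))) = (x*y*x*y*x) * t by group, q]

lemma cube_swap {G : Type*} [Group G] {x y : G} (hx : x⁻¹ = x) (hy : y⁻¹ = y)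
    (h : (x * y) ^ 3 = 1) : (y * x) ^ 3 = 1 := by
  have h2 : ((x * y)⁻¹) ^ 3 = 1 := by rw [inv_pow, h, inv_one]
  rwa [mul_inv_rev, hx, hy] at h2

lemma pab (t : GA) : A * (B * (A * (B * (A * t)))) = B * t := pent invB cubeAB t
lemma pba (t : GA) : B * (A * (B * (A * (B * t)))) = A * t := pent invA (cube_swap invA invB cubeAB) t
lemma pbc (t : GA) : B * (C * (B * (C * (B * t)))) = C * t := pent invC cubeBC t
lemma pcb (t : GA) : C * (B * (C * (B * (C * t)))) = B * t := pent invB (cube_swap invB invC cubeBC) t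
lemma pac (t : GA) : A * (C * (A * (C * (A * t)))) = C * t := pent invC cubeAC t
lemma pca (t : GA) : C * (A * (C * (A * (C * t)))) = A * t := pent invA (cube_swap invA invC cubeAC) t

/-- the coloring of the nine arcs by reflections. -/
def fcol : Fin 9 → GA
  | 0 => A
  | 1 => B
  | 2 => A * B * A⁻¹
  | 3 => B
  | 4 => A
  | 5 => C
  | 6 => C * B * C⁻¹
  | 7 => C
  | 8 => C * A * C⁻¹

lemma fcol_rels : ∀ r ∈ pretzelRels, FreeGroup.lift fcol r = 1 := by
  intro r hr
  simp only [pretzelRels, Set.mem_insert_iff, Set.mem_singleton_iff] at hr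
  rcases hr with rfl|rfl|rfl|rfl|rfl|rfl|rfl|rfl|rfl <;>
    simp only [_root_.map_mul, _root_.map_inv, FreeGroup.lift_apply_of] <;>
    simp only [show fcol 0 = A from rfl, show fcol 1 = B from rfl,
      show fcol 2 = A * B * A⁻¹ from rfl, show fcol 3 = B from rfl, show fcol 4 = A from rfl,
      show fcol 5 = C from rfl, show fcol 6 = C * B * C⁻¹ from rfl, show fcol 7 = C from rfl,
      show fcol 8 = C * A * C⁻¹ from rfl, mul_inv_rev, invA, invB, invC, inv_inv, mul_assoc] <;>
    simp only [pab, pba, pbc, pcb, pac, pca, sqA', sqB', sqC', sqA, sqB, sqC, mul_one, one_mul]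

end Pz
namespace Pz

def φ : PresentedGroup pretzelRels →* GA := PresentedGroup.toGroup fcol_rels

lemma φ_of (i : Fin 9) : φ (PresentedGroup.of i) = fcol i := PresentedGroup.toGroup.of fcol_rels

def gcol : Fin 3 → Equiv.Perm (Fin 4)
  | 0 => Equiv.swap 0 1
  | 1 => Equiv.swap 0 2
  | 2 => Equiv.swap 0 3

lemma gcol_rels : ∀ r ∈ affineA2Rels, FreeGroup.lift gcol r = 1 := by
  intro r hr
  simp only [affineA2Rels, Set.mem_insert_iff, Set.mem_singleton_iff] at hr
  rcases hr with rfl|rfl|rfl|rfl|rfl|rfl <;>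
    simp only [map_pow, _root_.map_mul, FreeGroup.lift_apply_of] <;> decide

def ψ : GA →* Equiv.Perm (Fin 4) := PresentedGroup.toGroup gcol_rels

lemma ψA : ψ A = Equiv.swap 0 1 := PresentedGroup.toGroup.of gcol_rels
lemma ψB : ψ B = Equiv.swap 0 2 := PresentedGroup.toGroup.of gcol_rels
lemma ψC : ψ C = Equiv.swap 0 3 := PresentedGroup.toGroup.of gcol_rels

lemma ψ_surj : Function.Surjective ψ := by
  rw [← MonoidHom.range_eq_top, eq_top_iff, ← Equiv.Perm.closure_isSwap, Subgroup.closure_le]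
  rintro σ ⟨x, y, hxy, rfl⟩
  have mA : Equiv.swap 0 1 ∈ ψ.range := ⟨A, ψA⟩
  have mB : Equiv.swap 0 2 ∈ ψ.range := ⟨B, ψB⟩
  have mC : Equiv.swap 0 3 ∈ ψ.range := ⟨C, ψC⟩
  have mAB : Equiv.swap 1 2 ∈ ψ.range :=
    ⟨A * B * A, by rw [_root_.map_mul, _root_.map_mul, ψA, ψB]; decide⟩
  have mAC : Equiv.swap 1 3 ∈ ψ.range :=
    ⟨A * C * A, by rw [_root_.map_mul, _root_.map_mul, ψA, ψC]; decide⟩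
  have mBC : Equiv.swap 2 3 ∈ ψ.range :=
    ⟨B * C * B, by rw [_root_.map_mul, _root_.map_mul, ψB, ψC]; decide⟩
  have hsymm : ∀ u v : Fin 4, Equiv.swap u v = Equiv.swap v u := fun u v => Equiv.swap_comm u v
  fin_cases x <;> fin_cases y <;>
    first
      | exact absurd rfl hxy
      | exact mA | exact mB | exact mC | exact mAB | exact mAC | exact mBC
      | (rw [hsymm])
      <;> first | exact mA | exact mB | exact mC | exact mAB | exact mAC | exact mBC

lemma φ_surj : Function.Surjective φ := by
  intro x
  have hj : ∀ j : Fin 3, PresentedGroup.of j ∈ φ.range := by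
    intro j
    fin_cases j
    · exact ⟨PresentedGroup.of 0, φ_of 0⟩
    · exact ⟨PresentedGroup.of 1, φ_of 1⟩
    · exact ⟨PresentedGroup.of 5, φ_of 5⟩
  exact PresentedGroup.generated_by affineA2Rels φ.range hj x

lemma isSwap_conj {σ u : Equiv.Perm (Fin 4)} (h : σ.IsSwap) : (u * σ * u⁻¹).IsSwap := by
  obtain ⟨x, y, hxy, rfl⟩ := h
  exact ⟨u x, u y, fun he => hxy (u.injective he), (Equiv.swap_apply_apply u x y).symm⟩

lemma isSwap_inv {σ : Equiv.Perm (Fin 4)} (h : σ.IsSwap) : σ⁻¹.IsSwap := by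
  obtain ⟨x, y, hxy, rfl⟩ := h
  rw [Equiv.swap_inv]
  exact ⟨x, y, hxy, rfl⟩

lemma swap_of_meridian (i : Fin 9) : (ψ (φ (PresentedGroup.of i))).IsSwap := by
  rw [φ_of]
  fin_cases i
  · show (ψ A).IsSwap; rw [ψA]; exact ⟨0, 1, by decide, rfl⟩
  · show (ψ B).IsSwap; rw [ψB]; exact ⟨0, 2, by decide, rfl⟩
  · show (ψ (A * B * A⁻¹)).IsSwap
    rw [_root_.map_mul, _root_.map_mul, _root_.map_inv, ψA, ψB]
    exact ⟨1, 2, by decide, by decide⟩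
  · show (ψ B).IsSwap; rw [ψB]; exact ⟨0, 2, by decide, rfl⟩
  · show (ψ A).IsSwap; rw [ψA]; exact ⟨0, 1, by decide, rfl⟩
  · show (ψ C).IsSwap; rw [ψC]; exact ⟨0, 3, by decide, rfl⟩
  · show (ψ (C * B * C⁻¹)).IsSwap
    rw [_root_.map_mul, _root_.map_mul, _root_.map_inv, ψC, ψB]
    exact ⟨3, 2, by decide, by decide⟩
  · show (ψ C).IsSwap; rw [ψC]; exact ⟨0, 3, by decide, rfl⟩
  · show (ψ (C * A * C⁻¹)).IsSwap
    rw [_root_.map_mul, _root_.map_mul, _root_.map_inv, ψC, ψA]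
    exact ⟨3, 1, by decide, by decide⟩

lemma three_cover (a b d : Fin 4) (h : ∀ e : Fin 4, e = a ∨ e = b ∨ e = d) : False := by
  have hsub : (Finset.univ : Finset (Fin 4)) ⊆ {a, b, d} := by
    intro e _
    rcases h e with rfl|rfl|rfl <;> simp
  have h1 := Finset.card_le_card hsub
  have h2 : ({a, b, d} : Finset (Fin 4)).card ≤ 3 := by
    have i1 := Finset.card_insert_le a ({b, d} : Finset (Fin 4))
    have i2 := Finset.card_insert_le b ({d} : Finset (Fin 4))
    have i3 : ({d} : Finset (Fin 4)).card = 1 := Finset.card_singleton d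
    omega
  rw [Finset.card_univ, Fintype.card_fin] at h1
  omega

lemma two_swaps_not_top (s t : Equiv.Perm (Fin 4)) (hs : s.IsSwap) (ht : t.IsSwap) :
    Subgroup.closure ({s, t} : Set (Equiv.Perm (Fin 4))) ≠ ⊤ := by
  obtain ⟨a, b, hab, rfl⟩ := hs
  obtain ⟨c, d, hcd, rfl⟩ := ht
  intro hcl
  by_cases hex : ∃ e : Fin 4, e ≠ a ∧ e ≠ b ∧ e ≠ c ∧ e ≠ d
  · obtain ⟨e, hea, heb, hec, hed⟩ := hex
    have hle : Subgroup.closure ({Equiv.swap a b, Equiv.swap c d} : Set _) ≤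
        MulAction.stabilizer (Equiv.Perm (Fin 4)) e := by
      rw [Subgroup.closure_le]
      rintro σ (rfl | rfl)
      · exact MulAction.mem_stabilizer_iff.mpr (Equiv.swap_apply_of_ne_of_ne hea heb)
      · exact MulAction.mem_stabilizer_iff.mpr (Equiv.swap_apply_of_ne_of_ne hec hed)
    rw [hcl] at hle
    have hmem := hle (Subgroup.mem_top (Equiv.swap e a))
    rw [MulAction.mem_stabilizer_iff] at hmem
    have : Equiv.swap e a e = a := Equiv.swap_apply_left e a
    rw [show (Equiv.swap e a • e) = Equiv.swap e a e from rfl, this] at hmem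
    exact hea hmem.symm
  · push_neg at hex
    have cover : ∀ e : Fin 4, e = a ∨ e = b ∨ e = c ∨ e = d := by
      intro e
      by_cases h1 : e = a; · exact Or.inl h1
      by_cases h2 : e = b; · exact Or.inr (Or.inl h2)
      by_cases h3 : e = c; · exact Or.inr (Or.inr (Or.inl h3))
      exact Or.inr (Or.inr (Or.inr (hex e h1 h2 h3)))
    have hac : a ≠ c := by
      rintro rfl
      exact three_cover a b d (fun e => by rcases cover e with h|h|h|h <;> tauto)
    have had : a ≠ d := by
      rintro rfl
      exact three_cover a b c (fun e => by rcases cover e with h|h|h|h <;> tauto)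
    have hbc : b ≠ c := by
      rintro rfl
      exact three_cover a b d (fun e => by rcases cover e with h|h|h|h <;> tauto)
    have hbd : b ≠ d := by
      rintro rfl
      exact three_cover a b c (fun e => by rcases cover e with h|h|h|h <;> tauto)
    have hdisj : (Equiv.swap a b).Disjoint (Equiv.swap c d) := by
      intro x
      rcases cover x with rfl|rfl|rfl|rfl
      · exact Or.inr (Equiv.swap_apply_of_ne_of_ne hac had)
      · exact Or.inr (Equiv.swap_apply_of_ne_of_ne hbc hbd)
      · exact Or.inl (Equiv.swap_apply_of_ne_of_ne hac.symm hbc.symm)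
      · exact Or.inl (Equiv.swap_apply_of_ne_of_ne had.symm hbd.symm)
    have hcomm := hdisj.commute
    have hle : Subgroup.closure ({Equiv.swap a b, Equiv.swap c d} : Set _) ≤
        Subgroup.centralizer ({Equiv.swap a b, Equiv.swap c d} : Set _) := by
      rw [Subgroup.closure_le]
      rintro σ (rfl | rfl) <;> rw [SetLike.mem_coe, Subgroup.mem_centralizer_iff] <;>
        rintro g (rfl | rfl)
      · rfl
      · exact hcomm.symm.eq
      · exact hcomm.eq
      · rfl
    rw [hcl] at hle
    have hz := hle (Subgroup.mem_top (Equiv.swap b c))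
    rw [Subgroup.mem_centralizer_iff] at hz
    have h1 := hz (Equiv.swap a b) (Set.mem_insert _ _)
    have h2 := congrArg (fun σ : Equiv.Perm (Fin 4) => σ c) h1
    simp only [Equiv.Perm.mul_apply] at h2
    rw [Equiv.swap_apply_right b c, Equiv.swap_apply_right a b,
      Equiv.swap_apply_of_ne_of_ne hac.symm hbc.symm, Equiv.swap_apply_right b c] at h2
    exact hab h2

end Pz
/-- The knot group of the `(3,-3,3)`-pretzel knot surjects onto the Coxeter group
`⟨a, b, c | a² = b² = c² = 1, (ab)³ = (bc)³ = (ac)³ = 1⟩`, with meridians mapping to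
reflections; consequently its meridional rank is at least 3: no set of fewer than 3
meridians generates the knot group. -/
theorem pretzel_surjects_affineA2 :
    ∃ φ : PresentedGroup pretzelRels →* PresentedGroup affineA2Rels,
      Function.Surjective φ ∧
      (∀ i : Fin 9, ∃ (w : PresentedGroup affineA2Rels) (j : Fin 3),
        φ (PresentedGroup.of i) = w * PresentedGroup.of j * w⁻¹) ∧
      (∀ S : Finset (PresentedGroup pretzelRels),
        (∀ g ∈ S, ∃ (w : PresentedGroup pretzelRels) (i : Fin 9),
          g = w * PresentedGroup.of i * w⁻¹ ∨ g = w * (PresentedGroup.of i)⁻¹ * w⁻¹) →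
        Subgroup.closure (S : Set (PresentedGroup pretzelRels)) = ⊤ → 3 ≤ S.card) := by
  refine ⟨Pz.φ, Pz.φ_surj, ?_, ?_⟩
  · intro i
    fin_cases i
    · exact ⟨1, 0, by rw [Pz.φ_of]; show Pz.A = 1 * Pz.A * 1⁻¹; group⟩
    · exact ⟨1, 1, by rw [Pz.φ_of]; show Pz.B = 1 * Pz.B * 1⁻¹; group⟩
    · exact ⟨Pz.A, 1, by rw [Pz.φ_of]; rfl⟩
    · exact ⟨1, 1, by rw [Pz.φ_of]; show Pz.B = 1 * Pz.B * 1⁻¹; group⟩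
    · exact ⟨1, 0, by rw [Pz.φ_of]; show Pz.A = 1 * Pz.A * 1⁻¹; group⟩
    · exact ⟨1, 2, by rw [Pz.φ_of]; show Pz.C = 1 * Pz.C * 1⁻¹; group⟩
    · exact ⟨Pz.C, 1, by rw [Pz.φ_of]; rfl⟩
    · exact ⟨1, 2, by rw [Pz.φ_of]; show Pz.C = 1 * Pz.C * 1⁻¹; group⟩
    · exact ⟨Pz.C, 0, by rw [Pz.φ_of]; rfl⟩
  · intro S hS hgen
    by_contra hlt
    push_neg at hlt
    set h : PresentedGroup pretzelRels →* Equiv.Perm (Fin 4) := Pz.ψ.comp Pz.φ with hh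
    have hsurj : Function.Surjective h := Pz.ψ_surj.comp Pz.φ_surj
    have htop : Subgroup.closure (h '' (S : Set (PresentedGroup pretzelRels))) = ⊤ := by
      rw [← MonoidHom.map_closure, hgen, ← MonoidHom.range_eq_map]
      exact MonoidHom.range_eq_top.mpr hsurj
    have hsw : ∀ x ∈ h '' (S : Set (PresentedGroup pretzelRels)), Equiv.Perm.IsSwap x := by
      rintro x ⟨g, hgS, rfl⟩
      obtain ⟨w, i, hg | hg⟩ := hS g hgS <;> subst hg <;>
        simp only [hh, MonoidHom.comp_apply, _root_.map_mul, _root_.map_inv]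
      · exact Pz.isSwap_conj (Pz.swap_of_meridian i)
      · exact Pz.isSwap_conj (Pz.isSwap_inv (Pz.swap_of_meridian i))
    have himg : h '' (S : Set (PresentedGroup pretzelRels)) = ↑(S.image h) :=
      (Finset.coe_image).symm
    obtain ⟨s, t, hs, ht, hsub⟩ :
        ∃ s t : Equiv.Perm (Fin 4), s.IsSwap ∧ t.IsSwap ∧
          h '' (S : Set (PresentedGroup pretzelRels)) ⊆ {s, t} := by
      rcases Finset.eq_empty_or_nonempty (S.image h) with he | ⟨x, hx⟩
      · refine ⟨Equiv.swap 0 1, Equiv.swap 0 1, ⟨0, 1, by decide, rfl⟩,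
          ⟨0, 1, by decide, rfl⟩, ?_⟩
        rw [himg, he]
        simp
      · have hxs : Equiv.Perm.IsSwap x := hsw x (by rw [himg]; exact_mod_cast hx)
        by_cases hone : ∀ y ∈ S.image h, y = x
        · refine ⟨x, x, hxs, hxs, ?_⟩
          rw [himg]
          intro z hz
          exact Or.inl (hone z (Finset.mem_coe.mp hz))
        · push_neg at hone
          obtain ⟨y, hy, hyx⟩ := hone
          have hys : Equiv.Perm.IsSwap y := hsw y (by rw [himg]; exact_mod_cast hy)
          have hcard2 : ({x, y} : Finset (Equiv.Perm (Fin 4))).card = 2 := by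
            rw [Finset.card_insert_of_notMem (Finset.notMem_singleton.mpr (Ne.symm hyx)), Finset.card_singleton]
          have heq : ({x, y} : Finset (Equiv.Perm (Fin 4))) = S.image h := by
            apply Finset.eq_of_subset_of_card_le
            · intro z hz
              rcases Finset.mem_insert.mp hz with rfl | hz
              · exact hx
              · rw [Finset.mem_singleton.mp hz]; exact hy
            · have := Finset.card_image_le (s := S) (f := h)
              omega
          refine ⟨x, y, hxs, hys, ?_⟩
          rw [himg, ← heq]
          intro z hz
          rcases Finset.mem_insert.mp (Finset.mem_coe.mp hz) with rfl | hz
          · exact Or.inl rfl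
          · exact Or.inr (Finset.mem_singleton.mp hz)
    have hle : Subgroup.closure (h '' (S : Set (PresentedGroup pretzelRels))) ≤
        Subgroup.closure {s, t} := Subgroup.closure_mono hsub
    rw [htop, top_le_iff] at hle
    exact Pz.two_swaps_not_top s t hs ht hle
end

section
/- The affine Coxeter group of type Ã₂, G = ⟨a, b, c | a² = b² = c² = 1, (ab)³ = (bc)³ = (ac)³ = 1⟩, cannot be generated by two reflections; equivalently its Coxeter rank is 3. -/
/-- The Coxeter matrix of the affine Coxeter group of type `Ã₂`,
`⟨a, b, c | a² = b² = c² = 1, (ab)³ = (bc)³ = (ac)³ = 1⟩`. -/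
def coxMatrixAffineA2 : CoxeterMatrix (Fin 3) where
  M := !![1, 3, 3; 3, 1, 3; 3, 3, 1]
  off_diagonal := by
    intro i i' h
    fin_cases i <;> fin_cases i' <;> simp_all

/-!
A group generated by two involutions `x, y` is dihedral: conjugation by `x` or `y` inverts `x * y`,
so `⟨x * y⟩` is normal with cyclic quotient, every commutator is a power of `x * y`, and the group
is metabelian. In `Ã₂` the commutators `⁅s₀, s₁⁆` and `⁅s₁, s₂⁆` do not commute, as the action on
the affine plane over `𝔽₃` shows. A generating set of at most two reflections lies in such a pair,
so the rank is `3`, attained by the simple reflections.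
-/

open scoped commutatorElement Finset

section TwoInvolutions

variable {G : Type*} [Group G] {x y : G}

lemma conj_mul_eq_inv_of_mul_self_eq_one (hx : x * x = 1) (hy : y * y = 1) :
    x * (x * y) * x⁻¹ = (x * y)⁻¹ ∧ y * (x * y) * y⁻¹ = (x * y)⁻¹ := by
  rw [inv_eq_of_mul_eq_one_right hx, inv_eq_of_mul_eq_one_right hy, mul_inv_rev,
    inv_eq_of_mul_eq_one_right hx, inv_eq_of_mul_eq_one_right hy]
  constructor
  · rw [← mul_assoc, hx, one_mul]
  · rw [mul_assoc, mul_assoc, hy, mul_one]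

lemma zpowers_mul_normal_of_closure_pair (hx : x * x = 1) (hy : y * y = 1)
    (hcl : Subgroup.closure {x, y} = ⊤) : (Subgroup.zpowers (x * y)).Normal := by
  have h_mem_normalizer {g : G} (hg : g * (x * y) * g⁻¹ = (x * y)⁻¹) :
      g ∈ Subgroup.normalizer (Subgroup.zpowers (x * y) : Set G) := by
    rw [Subgroup.mem_normalizer_iff_map_conj_eq, MonoidHom.map_zpowers, MonoidHom.coe_coe,
      MulAut.conj_apply, hg, Subgroup.zpowers_inv]
  rw [← Subgroup.normalizer_eq_top_iff, eq_top_iff, ← hcl, Subgroup.closure_le]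
  obtain ⟨hxc, hyc⟩ := conj_mul_eq_inv_of_mul_self_eq_one hx hy
  rintro g (rfl | rfl)
  exacts [h_mem_normalizer hxc, h_mem_normalizer hyc]

lemma commutatorElement_mem_zpowers_mul_of_closure_pair (hx : x * x = 1) (hy : y * y = 1)
    (hcl : Subgroup.closure {x, y} = ⊤) (g h : G) : ⁅g, h⁆ ∈ Subgroup.zpowers (x * y) := by
  have := zpowers_mul_normal_of_closure_pair hx hy hcl
  set π := QuotientGroup.mk' (Subgroup.zpowers (x * y))
  have hπy : π y = (π x)⁻¹ := eq_inv_of_mul_eq_one_right <| by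
    rw [← map_mul, QuotientGroup.mk'_apply, QuotientGroup.eq_one_iff]
    exact Subgroup.mem_zpowers _
  have h_cyclic (q : G ⧸ Subgroup.zpowers (x * y)) : q ∈ Subgroup.zpowers (π x) := by
    have : Subgroup.map π (Subgroup.closure {x, y}) ≤ Subgroup.zpowers (π x) := by
      rw [MonoidHom.map_closure, Subgroup.closure_le, Set.image_pair, hπy]
      rintro q (rfl | rfl)
      exacts [Subgroup.mem_zpowers _, inv_mem (Subgroup.mem_zpowers _)]
    rw [hcl, Subgroup.map_top_of_surjective π (QuotientGroup.mk'_surjective _)] at this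
    exact this (Subgroup.mem_top q)
  rw [← QuotientGroup.eq_one_iff, ← QuotientGroup.mk'_apply, map_commutatorElement,
    commutatorElement_eq_one_iff_commute]
  obtain ⟨m, hm⟩ := h_cyclic (π g)
  obtain ⟨n, hn⟩ := h_cyclic (π h)
  rw [← hm, ← hn]
  exact Commute.zpow_zpow_self _ m n

lemma commutatorElement_commutatorElement_eq_one_of_closure_pair (hx : x * x = 1)
    (hy : y * y = 1) (hcl : Subgroup.closure {x, y} = ⊤) (a b c d : G) :
    ⁅⁅a, b⁆, ⁅c, d⁆⁆ = 1 := by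
  obtain ⟨m, hm⟩ := commutatorElement_mem_zpowers_mul_of_closure_pair hx hy hcl a b
  obtain ⟨n, hn⟩ := commutatorElement_mem_zpowers_mul_of_closure_pair hx hy hcl c d
  rw [← hm, ← hn, commutatorElement_eq_one_iff_commute]
  exact Commute.zpow_zpow_self _ m n

end TwoInvolutions

lemma Finset.exists_subset_pair_of_card_le_two {α : Type*} {p : α → Prop} {a : α} (ha : p a)
    {S : Finset α} (hS : #S ≤ 2) (hp : ∀ x ∈ S, p x) :
    ∃ x y, p x ∧ p y ∧ (S : Set α) ⊆ {x, y} := by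
  classical
  interval_cases h : #S
  · exact ⟨a, a, ha, ha, by simp [Finset.card_eq_zero.mp h]⟩
  · obtain ⟨x, hx⟩ := Finset.card_eq_one.mp h
    exact ⟨x, x, hp x (by simp [hx]), hp x (by simp [hx]), by simp [hx]⟩
  · obtain ⟨x, y, -, hxy⟩ := Finset.card_eq_two.mp h
    exact ⟨x, y, hp x (by simp [hxy]), hp y (by simp [hxy]), by simp [hxy]⟩

/-- Reflections of the affine plane `𝔽₃²` in homogeneous coordinates. -/
def affineA2Matrix : Fin 3 → Matrix (Fin 3) (Fin 3) (ZMod 3)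
  | 0 => !![2, 1, 0; 0, 1, 0; 0, 0, 1]
  | 1 => !![1, 0, 0; 1, 2, 0; 0, 0, 1]
  | 2 => !![0, 2, 1; 2, 0, 1; 0, 0, 1]

lemma affineA2Matrix_mul_self (i : Fin 3) : affineA2Matrix i * affineA2Matrix i = 1 := by
  fin_cases i <;> decide

def affineA2Unit (i : Fin 3) : (Matrix (Fin 3) (Fin 3) (ZMod 3))ˣ :=
  ⟨affineA2Matrix i, affineA2Matrix i, affineA2Matrix_mul_self i, affineA2Matrix_mul_self i⟩

lemma isLiftable_affineA2Unit : coxMatrixAffineA2.IsLiftable affineA2Unit := by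
  intro i j
  apply Units.ext
  fin_cases i <;> fin_cases j <;>
    simp only [Units.val_pow_eq_pow_val, Units.val_mul, Units.val_one, affineA2Unit,
      coxMatrixAffineA2] <;>
    decide

noncomputable def affineA2Rep : coxMatrixAffineA2.Group →* (Matrix (Fin 3) (Fin 3) (ZMod 3))ˣ :=
  coxMatrixAffineA2.toCoxeterSystem.lift ⟨affineA2Unit, isLiftable_affineA2Unit⟩

lemma affineA2Rep_simple (i : Fin 3) :
    affineA2Rep (coxMatrixAffineA2.toCoxeterSystem.simple i) = affineA2Unit i :=
  CoxeterSystem.lift_apply_simple _ isLiftable_affineA2Unit i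

lemma affineA2_simple_injective : Function.Injective coxMatrixAffineA2.toCoxeterSystem.simple := by
  intro i j h
  replace h := congrArg affineA2Rep h
  rw [affineA2Rep_simple, affineA2Rep_simple] at h
  fin_cases i <;> fin_cases j <;> first | rfl | (revert h; decide)

lemma affineA2_commutatorElement_simple_ne_one :
    ⁅⁅coxMatrixAffineA2.toCoxeterSystem.simple 0, coxMatrixAffineA2.toCoxeterSystem.simple 1⁆,
      ⁅coxMatrixAffineA2.toCoxeterSystem.simple 1,
        coxMatrixAffineA2.toCoxeterSystem.simple 2⁆⁆ ≠ 1 := by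
  refine mt (congrArg affineA2Rep) ?_
  simp only [map_commutatorElement, affineA2Rep_simple, map_one]
  decide

lemma affineA2_closure_pair_ne_top {x y : coxMatrixAffineA2.Group} (hx : x * x = 1)
    (hy : y * y = 1) : Subgroup.closure {x, y} ≠ ⊤ := fun hcl ↦
  affineA2_commutatorElement_simple_ne_one
    (commutatorElement_commutatorElement_eq_one_of_closure_pair hx hy hcl _ _ _ _)

/-- The affine Coxeter group of type `Ã₂` cannot be generated by two reflections;
equivalently, its Coxeter rank is 3. -/
theorem affineA2_rank_three :
    (¬ ∃ t₁ t₂ : coxMatrixAffineA2.Group,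
        coxMatrixAffineA2.toCoxeterSystem.IsReflection t₁ ∧
        coxMatrixAffineA2.toCoxeterSystem.IsReflection t₂ ∧
        Subgroup.closure {t₁, t₂} = ⊤) ∧
    IsLeast {k : ℕ | ∃ S : Finset coxMatrixAffineA2.Group,
      (∀ g ∈ S, coxMatrixAffineA2.toCoxeterSystem.IsReflection g) ∧
      Subgroup.closure (S : Set coxMatrixAffineA2.Group) = ⊤ ∧ S.card = k} 3 := by
  classical
  set cs := coxMatrixAffineA2.toCoxeterSystem
  refine ⟨fun ⟨t₁, t₂, h₁, h₂, hcl⟩ ↦ affineA2_closure_pair_ne_top h₁.mul_self h₂.mul_self hcl,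
    ⟨Finset.univ.image cs.simple, ?_, ?_, ?_⟩, ?_⟩
  · simp only [Finset.mem_image]
    rintro _ ⟨i, -, rfl⟩
    exact cs.isReflection_simple i
  · rw [Finset.coe_image, Finset.coe_univ, Set.image_univ]
    exact cs.subgroup_closure_range_simple
  · rw [Finset.card_image_of_injective _ affineA2_simple_injective, Finset.card_fin]
  · rintro k ⟨S, hS, hcl, rfl⟩
    by_contra! hlt
    obtain ⟨x, y, hx, hy, hsub⟩ := Finset.exists_subset_pair_of_card_le_two
      (p := fun g ↦ g * g = 1) (mul_one 1) (by omega) fun g hg ↦ (hS g hg).mul_self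
    exact affineA2_closure_pair_ne_top hx hy (top_le_iff.mp (hcl ▸ Subgroup.closure_mono hsub))
end

section
/- Let D be a knot diagram with strand set S and crossing set C, and suppose {s₁, ..., s_n} is a generating set of seeds for D, i.e., there is a sequence of coloring moves starting from {s₁, ..., s_n} that colors all strands, where a coloring move at a crossing adds the uncolored understrand when the overstrand and one understrand are colored. Then the Wirtinger meridians of s₁, ..., s_n generate the knot group π₁(S³∖K) presented by its Wirtinger presentation. Formally: in a group presented with generators m_s (s ∈ S) and relations m_{u₂} = m_o m_{u₁} m_o^{±1} at each crossing, if a subset S₀ ⊆ S admits a complete coloring sequence, then the subgroup generated by {m_s : s ∈ S₀} is the whole group. -/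
/-- Wirtinger relator of a crossing `x = (o, u₁, u₂)` with sign `sgn x`:
`m_{u₂} = m_o^{±1} * m_{u₁} * m_o^{∓1}`. -/
def wirtingerRel {S : Type*} (sgn : S × S × S → Bool) (x : S × S × S) : FreeGroup S :=
  FreeGroup.of x.2.2 *
    ((FreeGroup.of x.1) ^ (if sgn x then (1 : ℤ) else -1) * FreeGroup.of x.2.1 *
      (FreeGroup.of x.1) ^ (if sgn x then (-1 : ℤ) else 1))⁻¹

/-- A strand is `Colored` if it lies in the seed set `S₀` or is obtained by a sequence of
coloring moves: at a crossing `(o, u₁, u₂)`, if the overstrand `o` and the understrand `u₁`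
are colored, then `u₂` becomes colored. -/
inductive Colored {S : Type*} (C : Set (S × S × S)) (S₀ : Set S) : S → Prop
  | seed {s : S} : s ∈ S₀ → Colored C S₀ s
  | move {x : S × S × S} : x ∈ C → Colored C S₀ x.1 → Colored C S₀ x.2.1 →
      Colored C S₀ x.2.2

/-- If a subset `S₀` of the strands of a diagram admits a complete coloring sequence (every
strand is eventually colored), then in the group with Wirtinger presentation (one generator
per strand, one conjugation relation `m_{u₂} = m_o m_{u₁} m_o^{±1}` per crossing) the
meridians of the strands of `S₀` generate the whole group. -/
theorem seeds_generate_wirtinger_group {S : Type*} (C : Set (S × S × S))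
    (sgn : S × S × S → Bool) (S₀ : Set S)
    (hcolor : ∀ s : S, Colored C S₀ s) :
    Subgroup.closure
      ((fun s => (PresentedGroup.of s : PresentedGroup (wirtingerRel sgn '' C))) '' S₀) = ⊤ := by
  set rels : Set (FreeGroup S) := wirtingerRel sgn '' C with hrels
  set H := Subgroup.closure
      ((fun s => (PresentedGroup.of s : PresentedGroup rels)) '' S₀) with hH
  have key : ∀ s : S, (PresentedGroup.of s : PresentedGroup rels) ∈ H := by
    intro s
    induction hcolor s with
    | seed hs => exact Subgroup.subset_closure ⟨_, hs, rfl⟩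
    | move hx _ _ iho ihu =>
      rename_i x _ _
      have hrel : PresentedGroup.mk rels (wirtingerRel sgn x) = 1 := by
        apply (QuotientGroup.eq_one_iff _).2
        exact Subgroup.subset_normalClosure ⟨x, hx, rfl⟩
      have : (PresentedGroup.of x.2.2 : PresentedGroup rels) =
          (PresentedGroup.of x.1 : PresentedGroup rels) ^ (if sgn x then (1:ℤ) else -1) *
            PresentedGroup.of x.2.1 *
            (PresentedGroup.of x.1) ^ (if sgn x then (-1:ℤ) else 1) := by
        have := hrel
        simp only [wirtingerRel, map_mul, map_inv, map_zpow] at this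
        rw [mul_inv_eq_one] at this
        exact this
      rw [this]
      exact mul_mem (mul_mem (zpow_mem iho _) ihu) (zpow_mem iho _)
  rw [eq_top_iff, ← PresentedGroup.closure_range_of rels, Subgroup.closure_le]
  rintro _ ⟨s, rfl⟩
  exact key s
end
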